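/- In the category of finitely presented representations of the infinite linear quiver 1 → 2 → ⋯ → n → ⋯ over a field, the projective cover f_i : P_i → S_i of the simple S_i is not right C-determined for any object C. -/

import Mathlib

open CategoryTheory CategoryTheory.Limits

noncomputable section

/-- The definition of a morphism being right `Cd`-determined. -/
def RightDetermined {C : Type*} [Category C] {X Y : C} (f : X ⟶ Y) (Cd : C) : Prop :=
  ∀ ⦃T : C⦄ (g : T ⟶ Y), (∀ h : Cd ⟶ T, ∃ s : Cd ⟶ X, h ≫ g = s ≫ f) →
    ∃ t : T ⟶ X, g = t ≫ f

attribute [local instance] CategoryTheory.Abelian.hasFiniteBiproducts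

variable (K : Type) [Field K]

/-- Representations of the infinite linear quiver `1 → 2 → ⋯` over `K`, i.e. functors
from the poset `ℕ` to `K`-vector spaces. -/
abbrev LinRep := ℕ ⥤ ModuleCat K

/-- The indecomposable projective representation `P i` at the vertex `i`:
the linearization of `Hom(i, -)`. -/
def Pj (i : ℕ) : LinRep K := coyoneda.obj (Opposite.op i) ⋙ ModuleCat.free K

/-- The canonical inclusion `P (i+1) ⟶ P i`. -/
def pmap (i : ℕ) : Pj K (i + 1) ⟶ Pj K i :=
  Functor.whiskerRight (coyoneda.map (homOfLE (Nat.le_succ i)).op) (ModuleCat.free K)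

/-- The simple representation `S i` at the vertex `i`, realized as the cokernel of
`P (i+1) ⟶ P i`. -/
def Sj (i : ℕ) : LinRep K := cokernel (pmap K i)

/-- The projective cover `f i : P i ⟶ S i`. -/
def fj (i : ℕ) : Pj K i ⟶ Sj K i := cokernel.π (pmap K i)

/-- A representation is finitely presented if it is the cokernel of a morphism between
finite direct sums of the projectives `P i`. -/
def FinPres (M : LinRep K) : Prop :=
  ∃ (n m : ℕ) (a : Fin n → ℕ) (b : Fin m → ℕ)
    (g : (⨁ fun j => Pj K (a j)) ⟶ (⨁ fun j => Pj K (b j))),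
    Nonempty (M ≅ cokernel g)

/-- The category of finitely presented representations. -/
abbrev FPRep := ObjectProperty.FullSubcategory (FinPres K)

/-- A one-element biproduct is isomorphic to its unique component. -/
def biprodSingle (Z : LinRep K) : (⨁ fun _ : Fin 1 => Z) ≅ Z where
  hom := biproduct.π _ 0
  inv := biproduct.lift fun _ => 𝟙 Z
  hom_inv_id := by
    apply biproduct.hom_ext
    intro j
    have hj : j = 0 := Subsingleton.elim _ _
    subst hj
    simp
  inv_hom_id := by simp

lemma Pj_finPres (i : ℕ) : FinPres K (Pj K i) := by
  refine ⟨0, 1, Fin.elim0, fun _ => i,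
    (0 : (⨁ fun j : Fin 0 => Pj K (Fin.elim0 j)) ⟶ (⨁ fun _ : Fin 1 => Pj K i)), ⟨?_⟩⟩
  exact (biprodSingle K (Pj K i)).symm ≪≫ cokernelZeroIsoTarget.symm

lemma Sj_finPres (i : ℕ) : FinPres K (Sj K i) := by
  refine ⟨1, 1, fun _ => i + 1, fun _ => i,
    (biprodSingle K (Pj K (i + 1))).hom ≫ pmap K i ≫ (biprodSingle K (Pj K i)).inv, ⟨?_⟩⟩
  exact ((cokernelEpiComp (biprodSingle K (Pj K (i + 1))).hom
      (pmap K i ≫ (biprodSingle K (Pj K i)).inv)) ≪≫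
    cokernelCompIsIso (pmap K i) (biprodSingle K (Pj K i)).inv).symm

/-- `P i` as an object of the category of finitely presented representations. -/
def PjFP (i : ℕ) : FPRep K := ⟨Pj K i, Pj_finPres K i⟩

/-- `S i` as an object of the category of finitely presented representations. -/
def SjFP (i : ℕ) : FPRep K := ⟨Sj K i, Sj_finPres K i⟩

/-- The projective cover `f i : P i ⟶ S i` in the category of finitely presented
representations. -/
def fjFP (i : ℕ) : PjFP K i ⟶ SjFP K i := ObjectProperty.homMk (fj K i)

section Aux

variable {K}

/-- The canonical inclusion `P j ⟶ P i` for `i ≤ j`. -/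
def pmapLe {i j : ℕ} (h : i ≤ j) : Pj K j ⟶ Pj K i :=
  Functor.whiskerRight (coyoneda.map (homOfLE h).op) (ModuleCat.free K)

lemma Pj_obj_subsingleton {p q : ℕ} (h : ¬ p ≤ q) : Subsingleton ((Pj K p).obj q) := by
  have : IsEmpty ((coyoneda.obj (Opposite.op p)).obj q) := ⟨fun g => h (leOfHom g)⟩
  exact ⟨fun a b => Finsupp.ext fun x => (IsEmpty.false x).elim⟩

/-- The canonical generator of `(P b).obj b`. -/
def elt (b : ℕ) : (Pj K b).obj b := ModuleCat.freeMk (𝟙 b)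

lemma Pj_map_apply {b j j' : ℕ} (f : (j : ℕ) ⟶ j') (g : (b : ℕ) ⟶ j) :
    (Pj K b).map f (ModuleCat.freeMk g) = ModuleCat.freeMk (g ≫ f) :=
  ModuleCat.free_map_apply ((coyoneda.obj (Opposite.op b)).map f) g

lemma Pj_map_elt {b j : ℕ} (f : (b : ℕ) ⟶ j) :
    (Pj K b).map f (elt b) = ModuleCat.freeMk f := by
  rw [elt, Pj_map_apply, Category.id_comp]

instance homSubsingleton (p q : ℕ) : Subsingleton ((coyoneda.obj (Opposite.op p)).obj q) :=
  inferInstanceAs (Subsingleton ((p : ℕ) ⟶ q))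

lemma nat_app {F G : LinRep K} (φ : F ⟶ G) {x y : ℕ} (f : (x : ℕ) ⟶ y) (m : F.obj x) :
    φ.app y (F.map f m) = G.map f (φ.app x m) := by
  calc φ.app y (F.map f m) = (F.map f ≫ φ.app y) m := rfl
    _ = (φ.app x ≫ G.map f) m := by rw [φ.naturality f]
    _ = G.map f (φ.app x m) := rfl

lemma hom_ext_elt {b : ℕ} {M : LinRep K} {φ ψ : Pj K b ⟶ M}
    (h : φ.app b (elt b) = ψ.app b (elt b)) : φ = ψ := by
  ext j : 2
  apply ModuleCat.free_hom_ext
  intro f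
  calc φ.app j (ModuleCat.freeMk f) = φ.app j ((Pj K b).map f (elt b)) := by rw [Pj_map_elt]
    _ = M.map f (φ.app b (elt b)) := nat_app φ f (elt b)
    _ = M.map f (ψ.app b (elt b)) := by rw [h]
    _ = ψ.app j ((Pj K b).map f (elt b)) := (nat_app ψ f (elt b)).symm
    _ = ψ.app j (ModuleCat.freeMk f) := by rw [Pj_map_elt]

/-- The morphism `P b ⟶ M` corresponding to an element of `M.obj b`. -/
def toHom {b : ℕ} {M : LinRep K} (x : M.obj b) : Pj K b ⟶ M where
  app j := ModuleCat.freeDesc (TypeCat.ofHom fun f : (b : ℕ) ⟶ j => M.map f x)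
  naturality j j' f := by
    apply ModuleCat.free_hom_ext
    intro g
    change ModuleCat.freeDesc (TypeCat.ofHom fun f : (b : ℕ) ⟶ j' => M.map f x) ((Pj K b).map f _) =
      M.map f (ModuleCat.freeDesc (TypeCat.ofHom fun f : (b : ℕ) ⟶ j => M.map f x) _)
    rw [Pj_map_apply, ModuleCat.freeDesc_apply, ModuleCat.freeDesc_apply]
    change M.map (g ≫ f) x = M.map f (M.map g x)
    rw [M.map_comp]
    rfl

lemma toHom_elt {b : ℕ} {M : LinRep K} (x : M.obj b) : (toHom x).app b (elt b) = x := by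
  change ModuleCat.freeDesc (TypeCat.ofHom fun f : (b : ℕ) ⟶ b => M.map f x) (ModuleCat.freeMk (𝟙 b)) = x
  rw [ModuleCat.freeDesc_apply]
  change M.map (𝟙 b) x = x
  rw [M.map_id]
  rfl

lemma lift_of_epi {b : ℕ} {M N : LinRep K} (e : M ⟶ N) [Epi e] (H : Pj K b ⟶ N) :
    ∃ s : Pj K b ⟶ M, s ≫ e = H := by
  have he : Epi (e.app b) := inferInstance
  obtain ⟨z, hz⟩ := (ModuleCat.epi_iff_surjective _).1 he (H.app b (elt b))
  refine ⟨toHom z, hom_ext_elt ?_⟩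
  change e.app b ((toHom z).app b (elt b)) = H.app b (elt b)
  rw [toHom_elt, hz]

lemma hom_eq_zero {b p : ℕ} (h : b < p) (φ : Pj K b ⟶ Pj K p) : φ = 0 := by
  apply hom_ext_elt
  have := Pj_obj_subsingleton (K := K) (p := p) (q := b) (by omega)
  exact Subsingleton.elim _ _

lemma pmapLe_app {i j k : ℕ} (h : i ≤ j) (g : (j : ℕ) ⟶ k) :
    (pmapLe (K := K) h).app k (ModuleCat.freeMk g) = ModuleCat.freeMk (homOfLE h ≫ g) :=
  ModuleCat.free_map_apply ((coyoneda.map (homOfLE h).op).app k) g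

lemma pmapLe_comp {i j k : ℕ} (hij : i ≤ j) (hjk : j ≤ k) :
    pmapLe (K := K) hjk ≫ pmapLe hij = pmapLe (hij.trans hjk) := by
  apply hom_ext_elt
  change (pmapLe hij).app k ((pmapLe hjk).app k (elt k)) = (pmapLe (hij.trans hjk)).app k (elt k)
  rw [elt, pmapLe_app, pmapLe_app, pmapLe_app]
  exact congrArg _ (Subsingleton.elim _ _)

lemma pmap_eq (i : ℕ) : pmap K i = pmapLe (Nat.le_succ i) := rfl

instance pmapLe_mono {i j : ℕ} (h : i ≤ j) : Mono (pmapLe (K := K) h) := by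
  have : ∀ k : ℕ, Mono ((pmapLe (K := K) h).app k) := by
    intro k
    rw [ModuleCat.mono_iff_injective]
    exact Finsupp.mapDomain_injective (fun a b _ => Subsingleton.elim a b)
  exact NatTrans.mono_of_mono_app _

end Aux

/-- In the category of finitely presented representations of the quiver
`1 → 2 → ⋯ → n → ⋯`, the projective cover `f i : P i ⟶ S i` is not right
`Cd`-determined for any object `Cd`. -/
theorem stmt_18 (i : ℕ) (Cd : FPRep K) : ¬ RightDetermined (fjFP K i) Cd := by
  intro hdet
  obtain ⟨nA, mB, a, b, φ, ⟨iso⟩⟩ := Cd.property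
  set n : ℕ := max i (Finset.univ.sup a) with hn
  have hin : i ≤ n + 1 := by omega
  have han : ∀ j, a j < n + 1 := fun j =>
    Nat.lt_succ_of_le (le_max_of_le_right (Finset.le_sup (Finset.mem_univ j)))
  set inc : Pj K (n + 1) ⟶ Pj K i := pmapLe hin with hinc
  set T : LinRep K := cokernel inc with hT
  set q : Pj K i ⟶ T := cokernel.π inc with hq
  have winc : inc ≫ fj K i = 0 := by
    rw [hinc, show pmapLe (K := K) hin = pmapLe (Nat.le_succ i |>.trans (by omega)) from
      congrArg _ rfl]
    rw [← pmapLe_comp (Nat.le_succ i) (by omega : i + 1 ≤ n + 1), ← pmap_eq]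
    rw [Category.assoc, show pmap K i ≫ fj K i = 0 from cokernel.condition _, comp_zero]
  set g : T ⟶ Sj K i := cokernel.desc inc (fj K i) winc with hg
  have TFP : FinPres K T := by
    refine ⟨1, 1, fun _ => n + 1, fun _ => i,
      (biprodSingle K (Pj K (n + 1))).hom ≫ inc ≫ (biprodSingle K (Pj K i)).inv, ⟨?_⟩⟩
    exact ((cokernelEpiComp (biprodSingle K (Pj K (n + 1))).hom
        (inc ≫ (biprodSingle K (Pj K i)).inv)) ≪≫
      cokernelCompIsIso inc (biprodSingle K (Pj K i)).inv).symm
  set TT : FPRep K := ⟨T, TFP⟩ with hTT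
  have key : ∀ h : Cd ⟶ TT, ∃ s : Cd ⟶ PjFP K i,
      h ≫ (ObjectProperty.homMk g : TT ⟶ SjFP K i) = s ≫ fjFP K i := by
    intro h0
    let h : Cd.obj ⟶ T := h0.hom
    set πM : (⨁ fun k => Pj K (b k)) ⟶ Cd.obj := cokernel.π φ ≫ iso.inv with hπM
    have : Epi πM := epi_comp _ _
    choose s hs using fun k =>
      lift_of_epi q (biproduct.ι (fun k => Pj K (b k)) k ≫ πM ≫ h)
    set S : (⨁ fun k => Pj K (b k)) ⟶ Pj K i := biproduct.desc s with hS
    have hSq : S ≫ q = πM ≫ h := by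
      apply biproduct.hom_ext'
      intro k
      rw [← Category.assoc, hS, biproduct.ι_desc, hs k]
    have hφS : φ ≫ S = 0 := by
      apply biproduct.hom_ext'
      intro j
      have hvq : (biproduct.ι (fun j => Pj K (a j)) j ≫ φ ≫ S) ≫ q = 0 := by
        simp only [Category.assoc, hSq, hπM, cokernel.condition_assoc, zero_comp, comp_zero]
      rw [comp_zero, ← Abelian.monoLift_comp inc (biproduct.ι (fun j => Pj K (a j)) j ≫ φ ≫ S)
        hvq, hom_eq_zero (han j) (Abelian.monoLift inc _ hvq), zero_comp]
    set d : cokernel φ ⟶ Pj K i := cokernel.desc φ S hφS with hd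
    have goal : h ≫ g = (iso.hom ≫ d) ≫ fj K i := ?_
    · exact ⟨ObjectProperty.homMk (iso.hom ≫ d : Cd.obj ⟶ Pj K i), ObjectProperty.hom_ext _ goal⟩
    rw [← cancel_epi πM]
    have h1 : q ≫ g = fj K i := cokernel.π_desc _ _ _
    calc πM ≫ h ≫ g = (S ≫ q) ≫ g := by rw [hSq]; simp only [hπM, Category.assoc]
      _ = S ≫ fj K i := by rw [Category.assoc, h1]
      _ = (cokernel.π φ ≫ d) ≫ fj K i := by rw [hd, cokernel.π_desc]
      _ = πM ≫ (iso.hom ≫ d) ≫ fj K i := by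
          rw [hπM]
          simp only [Category.assoc, Iso.inv_hom_id_assoc]
  obtain ⟨t, ht⟩ := hdet (T := TT) (show TT ⟶ SjFP K i from ObjectProperty.homMk g) key
  -- t : T ⟶ Pj K i with g = t ≫ fj K i
  let t' : T ⟶ Pj K i := t.hom
  set u : Pj K i ⟶ Pj K i := q ≫ t' with hu
  have hincu : inc ≫ u = 0 := by
    rw [hu, ← Category.assoc, hq, cokernel.condition, zero_comp]
  have hu0 : u = 0 := by
    apply hom_ext_elt
    set x : ((Pj K i).obj i : Type _) := u.app i (elt i) with hx
    have h1 : (inc ≫ u).app (n + 1) (elt (n + 1)) = 0 := by rw [hincu]; rfl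
    have h2 : (inc ≫ u).app (n + 1) (elt (n + 1)) =
        (Pj K i).map (homOfLE hin) x := by
      change u.app (n + 1) (inc.app (n + 1) (elt (n + 1))) = _
      rw [hinc, elt, pmapLe_app, Category.comp_id, ← Pj_map_elt (homOfLE hin)]
      exact nat_app u (homOfLE hin) (elt i)
    have hxz : x = 0 := by
      have hinj : Function.Injective ((Pj K i).map (homOfLE hin)) :=
        Finsupp.mapDomain_injective (fun a b _ => Subsingleton.elim a b)
      apply hinj
      rw [← h2, h1, map_zero]
    rw [hxz]
    exact (LinearMap.zero_apply _).symm
  have ht0 : t' = 0 := by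
    rw [← cancel_epi q, ← hu, hu0, comp_zero]
  have hfj0 : fj K i = 0 := by
    have hqg : q ≫ g = fj K i := cokernel.π_desc _ _ _
    have ht' : g = t' ≫ fj K i := by exact congrArg (fun x => x.hom) ht
    rw [← hqg, ht', ht0, zero_comp, comp_zero]
  have hepi : Epi (pmap K i) := Abelian.epi_of_cokernel_π_eq_zero _ hfj0
  haveI := hepi
  have hepiapp : Epi ((pmap K i).app i) := inferInstance
  obtain ⟨z, hz⟩ := (ModuleCat.epi_iff_surjective _).1 hepiapp (elt i)
  have hsub := Pj_obj_subsingleton (K := K) (p := i + 1) (q := i) (by omega)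
  have hz0 : z = 0 := Subsingleton.elim _ _
  rw [hz0, map_zero] at hz
  exact (mt Finsupp.single_eq_zero.1 (one_ne_zero (α := K))) hz.symm

end
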